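/- Pivot uniqueness: if R = D·V and R' = D·V' are two decompositions with V, V' invertible upper triangular and R, R' column-reduced (each nonzero column has its lowest nonzero entry in a distinct row), then for every column j, R[·,j] = 0 if and only if R'[·,j] = 0, and when nonzero, low_R(j) = low_{R'}(j). -/
import Mathlib


/-- `IsLow R i j` : entry `(i,j)` is the lowest nonzero entry (pivot) of column `j`. -/
def IsLow {F : Type*} [Field F] {n m : ℕ} (R : Matrix (Fin n) (Fin m) F)
    (i : Fin n) (j : Fin m) : Prop :=
  R i j ≠ 0 ∧ ∀ i' : Fin n, i < i' → R i' j = 0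

/-- A matrix is column-reduced if the pivots of nonzero columns lie in distinct rows. -/
def ColumnReduced {F : Type*} [Field F] {n m : ℕ}
    (R : Matrix (Fin n) (Fin m) F) : Prop :=
  ∀ (j j' : Fin m) (i : Fin n), IsLow R i j → IsLow R i j' → j = j'

/-- A nonzero vector has a lowest nonzero entry. -/
lemma exists_low_vec {F : Type*} [Field F] {n : ℕ} (v : Fin n → F)
    (hv : ∃ a, v a ≠ 0) : ∃ b, v b ≠ 0 ∧ ∀ a, b < a → v a = 0 := by
  classical
  let s : Finset (Fin n) := Finset.univ.filter (fun a => v a ≠ 0)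
  have hs : s.Nonempty := by
    obtain ⟨a, ha⟩ := hv
    exact ⟨a, by simp [s, ha]⟩
  refine ⟨s.max' hs, ?_, ?_⟩
  · have := s.max'_mem hs
    simpa [s] using this
  · intro a ha
    by_contra h
    have : a ∈ s := by simp [s, h]
    exact absurd (Finset.le_max' s a this) (not_le.mpr ha)

/-- Pivot of a column is unique. -/
lemma IsLow.unique_row {F : Type*} [Field F] {n m : ℕ} {R : Matrix (Fin n) (Fin m) F}
    {i i' : Fin n} {j : Fin m} (h : IsLow R i j) (h' : IsLow R i' j) : i = i' := by
  rcases lt_trichotomy i i' with hlt | he | hgt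
  · exact absurd (h.2 i' hlt) h'.1
  · exact he
  · exact absurd (h'.2 i hgt) h.1

/-- The lowest nonzero entry of a linear combination of columns of a
column-reduced matrix is the pivot of one of the columns involved. -/
lemma combo_low {F : Type*} [Field F] {n : ℕ} (R : Matrix (Fin n) (Fin n) F)
    (hred : ColumnReduced R) (c : Fin n → F) (v : Fin n → F)
    (hv : ∀ a, v a = ∑ k, c k * R a k) (b : Fin n)
    (hb : v b ≠ 0) (hbl : ∀ a, b < a → v a = 0) :
    ∃ k, c k ≠ 0 ∧ IsLow R b k := by
  classical
  let t : Finset (Fin n) :=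
    Finset.univ.filter (fun k => c k ≠ 0 ∧ ∃ a, R a k ≠ 0)
  have ht : t.Nonempty := by
    have hb' : (∑ k, c k * R b k) ≠ 0 := by rw [← hv]; exact hb
    obtain ⟨k, -, hk⟩ := Finset.exists_ne_zero_of_sum_ne_zero hb'
    refine ⟨k, ?_⟩
    simp only [t, Finset.mem_filter, Finset.mem_univ, true_and]
    exact ⟨fun h => hk (by simp [h]), ⟨b, fun h => hk (by simp [h])⟩⟩
  -- a pivot-row function on t
  have hpiv : ∀ k ∈ t, ∃ i, IsLow R i k := by
    intro k hk
    simp only [t, Finset.mem_filter] at hk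
    obtain ⟨i, hi, hil⟩ := exists_low_vec (fun a => R a k) hk.2.2
    exact ⟨i, hi, hil⟩
  choose! p hp using hpiv
  obtain ⟨k₀, hk₀t, hk₀max⟩ := Finset.exists_max_image t p ht
  have hk₀ := hp k₀ hk₀t
  have hck₀ : c k₀ ≠ 0 := by
    simp only [t, Finset.mem_filter] at hk₀t; exact hk₀t.2.1
  -- the value of v at row p k₀ is c k₀ * R (p k₀) k₀
  have hval : v (p k₀) = c k₀ * R (p k₀) k₀ := by
    rw [hv]
    apply Finset.sum_eq_single k₀
    · intro k _ hk
      by_cases hck : c k = 0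
      · simp [hck]
      by_cases hcol : ∃ a, R a k ≠ 0
      · have hkt : k ∈ t := by
          simp only [t, Finset.mem_filter, Finset.mem_univ, true_and]
          exact ⟨hck, hcol⟩
        have hpk := hp k hkt
        by_cases hz : R (p k₀) k = 0
        · simp [hz]
        · -- then p k₀ ≤ p k, but p k ≤ p k₀, so pivots coincide: contradiction
          have h1 : p k₀ ≤ p k := by
            by_contra hc
            exact hz (hpk.2 (p k₀) (not_le.mp hc))
          have h2 : p k = p k₀ := le_antisymm (hk₀max k hkt) h1
          exact absurd (hred k k₀ (p k₀) (h2 ▸ hpk) hk₀) hk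
      · push_neg at hcol
        simp [hcol (p k₀)]
    · intro h
      exact absurd (Finset.mem_univ k₀) h
  have hvk₀ : v (p k₀) ≠ 0 := by
    rw [hval]; exact mul_ne_zero hck₀ hk₀.1
  -- p k₀ ≤ b
  have hle : p k₀ ≤ b := by
    by_contra hc
    exact hvk₀ (hbl _ (not_le.mp hc))
  -- b ≤ p k₀ : some contributing column is nonzero at row b
  have hge : b ≤ p k₀ := by
    have hb' : (∑ k, c k * R b k) ≠ 0 := by rw [← hv]; exact hb
    obtain ⟨k, -, hk⟩ := Finset.exists_ne_zero_of_sum_ne_zero hb'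
    have hck : c k ≠ 0 := fun h => hk (by simp [h])
    have hRk : R b k ≠ 0 := fun h => hk (by simp [h])
    have hkt : k ∈ t := by
      simp only [t, Finset.mem_filter, Finset.mem_univ, true_and]
      exact ⟨hck, ⟨b, hRk⟩⟩
    have hpk := hp k hkt
    have : b ≤ p k := by
      by_contra hc
      exact hRk (hpk.2 b (not_le.mp hc))
    exact le_trans this (hk₀max k hkt)
  have hbe : p k₀ = b := le_antisymm hle hge
  exact ⟨k₀, hck₀, hbe ▸ hk₀⟩

/-- One induction step of the pairing uniqueness argument. -/
lemma step_low {F : Type*} [Field F] {n : ℕ}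
    (R R' W W' : Matrix (Fin n) (Fin n) F)
    (hW : ∀ i j : Fin n, j < i → W i j = 0)
    (hW' : ∀ i j : Fin n, j < i → W' i j = 0)
    (h1 : R' = R * W) (h2 : R = R' * W')
    (hred : ColumnReduced R) (hred' : ColumnReduced R')
    (j : Fin n) (IH : ∀ k : Fin n, k < j → ∀ i, (IsLow R i k ↔ IsLow R' i k))
    (i : Fin n) (h : IsLow R i j) : IsLow R' i j := by
  classical
  -- column j of R as combination of columns of R'
  have hcomb : ∀ a, R a j = ∑ k, W' k j * R' a k := by
    intro a
    rw [h2]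
    simp [Matrix.mul_apply, mul_comm]
  -- column j of R' as combination of columns of R
  have hcomb' : ∀ a, R' a j = ∑ k, W k j * R a k := by
    intro a
    rw [h1]
    simp [Matrix.mul_apply, mul_comm]
  -- R' column j is nonzero
  have hne' : ∃ a, R' a j ≠ 0 := by
    by_contra hz
    push_neg at hz
    obtain ⟨k, hck, hk⟩ := combo_low R' hred' (fun k => W' k j) (fun a => R a j)
      hcomb i h.1 h.2
    rcases lt_trichotomy k j with hlt | he | hgt
    · have : IsLow R i k := (IH k hlt i).mpr hk
      exact absurd (hred k j i this h) (ne_of_lt hlt)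
    · exact hk.1 (he ▸ hz i)
    · exact hck (hW' k j hgt)
  obtain ⟨b, hb, hbl⟩ := exists_low_vec (fun a => R' a j) hne'
  obtain ⟨k, hck, hk⟩ := combo_low R hred (fun k => W k j) (fun a => R' a j)
    hcomb' b hb hbl
  rcases lt_trichotomy k j with hlt | he | hgt
  · have : IsLow R' b k := (IH k hlt b).mp hk
    exact absurd (hred' k j b this ⟨hb, hbl⟩) (ne_of_lt hlt)
  · subst he
    have : b = i := IsLow.unique_row hk h
    exact this ▸ ⟨hb, hbl⟩
  · exact absurd (hW k j hgt) hck

/-- Pairing Uniqueness Lemma: if `R = D·V` and `R' = D·V'` are two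
decompositions with `V, V'` invertible upper triangular and `R, R'`
column-reduced, then a column of `R` is zero iff the same column of `R'` is
zero, and the pivots agree. -/
theorem stmt_11 {F : Type*} [Field F] {n : ℕ}
    (D V V' R R' : Matrix (Fin n) (Fin n) F)
    (hV : IsUnit V.det) (hV' : IsUnit V'.det)
    (hVu : ∀ i j : Fin n, j < i → V i j = 0)
    (hV'u : ∀ i j : Fin n, j < i → V' i j = 0)
    (hR : R = D * V) (hR' : R' = D * V')
    (hred : ColumnReduced R) (hred' : ColumnReduced R') :
    ∀ j : Fin n,
      ((∀ i, R i j = 0) ↔ (∀ i, R' i j = 0)) ∧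
      (∀ i : Fin n, IsLow R i j → IsLow R' i j) := by
  classical
  haveI := V.invertibleOfIsUnitDet hV
  haveI := V'.invertibleOfIsUnitDet hV'
  have hVbt : V.BlockTriangular id := fun i j hij => hVu i j hij
  have hV'bt : V'.BlockTriangular id := fun i j hij => hV'u i j hij
  set W := V⁻¹ * V' with hWdef
  set W' := V'⁻¹ * V with hW'def
  have hWbt : W.BlockTriangular id :=
    (Matrix.blockTriangular_inv_of_blockTriangular hVbt).mul hV'bt
  have hW'bt : W'.BlockTriangular id :=
    (Matrix.blockTriangular_inv_of_blockTriangular hV'bt).mul hVbt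
  have hW : ∀ i j : Fin n, j < i → W i j = 0 := fun i j hij => hWbt hij
  have hW' : ∀ i j : Fin n, j < i → W' i j = 0 := fun i j hij => hW'bt hij
  have h1 : R' = R * W := by
    rw [hR, hR', hWdef, Matrix.mul_assoc, ← Matrix.mul_assoc V,
      Matrix.mul_nonsing_inv V hV, Matrix.one_mul]
  have h2 : R = R' * W' := by
    rw [hR, hR', hW'def, Matrix.mul_assoc, ← Matrix.mul_assoc V',
      Matrix.mul_nonsing_inv V' hV', Matrix.one_mul]
  -- key: pivots coincide, by strong induction on the column
  have key : ∀ N : ℕ, ∀ j : Fin n, j.val < N → ∀ i, (IsLow R i j ↔ IsLow R' i j) := by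
    intro N
    induction N with
    | zero => intro j hj; omega
    | succ N ihN =>
      intro j hj i
      have IH : ∀ k : Fin n, k < j → ∀ i, (IsLow R i k ↔ IsLow R' i k) := by
        intro k hk i'
        exact ihN k (by omega) i'
      constructor
      · exact step_low R R' W W' hW hW' h1 h2 hred hred' j IH i
      · exact step_low R' R W' W hW' hW h2 h1 hred' hred j
          (fun k hk i' => (IH k hk i').symm) i
  have key' : ∀ j : Fin n, ∀ i, (IsLow R i j ↔ IsLow R' i j) :=
    fun j i => key n j j.isLt i
  intro j
  constructor
  · constructor
    · intro hz
      by_contra hz'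
      push_neg at hz'
      obtain ⟨b, hb, hbl⟩ := exists_low_vec (fun a => R' a j) hz'
      exact ((key' j b).mpr ⟨hb, hbl⟩).1 (hz b)
    · intro hz
      by_contra hz'
      push_neg at hz'
      obtain ⟨b, hb, hbl⟩ := exists_low_vec (fun a => R a j) hz'
      exact ((key' j b).mp ⟨hb, hbl⟩).1 (hz b)
  · intro i hi
    exact (key' j i).mp hi
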